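/- arXiv:0709.3535 — 2 statements merged into one kernel-verified Lean document; each statement's English description precedes it below -/
import Mathlib

section
/- Let M be a 4×4 real matrix with nonnegative entries, of rank at most 2, with ∑_{i,j} M_{ij} > 0, such that L(M) ≥ L(N) for every 4×4 real matrix N with nonnegative entries and rank at most 2. Suppose M_{kl} = K + e_k·f_l for all k, l, where K is a nonzero real number and e, f ∈ ℝ⁴ have coordinates summing to 0. If e_i > e_j > 0 for some indices i, j, then f_i > f_j > 0. -/
open Finset

/-- The likelihood of the 100 Swiss Francs data table: diagonal counts 4,
off-diagonal counts 2. -/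
noncomputable def swissL (M : Matrix (Fin 4) (Fin 4) ℝ) : ℝ :=
  (∏ i : Fin 4, ∏ j : Fin 4, M i j ^ (if i = j then 4 else 2)) /
    (∑ i : Fin 4, ∑ j : Fin 4, M i j) ^ 40


/-!
Since `L(M) ≥ L(1) > 0`, every entry of `M` is positive, and the row sums `4K` give `K > 0`.
Moving `M = K + e fᵀ` to `K + e (f + t g)ᵀ` stays in the rank-two model and, as `∑ e = 0`, keeps
the total sum, so the log-likelihood is stationary in `g`: `∑ₖ eₖ / Mₖₗ + eₗ / Mₗₗ = 0` for every
column `l`; by the transpose symmetry of `L` the same holds for the rows with `f` in place of `e`.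
If `fᵢ ≤ fⱼ`, then `eₖ / Mₖᵢ ≥ eₖ / Mₖⱼ` for every `k`, so the column equations force
`eᵢ Mⱼⱼ ≤ eⱼ Mᵢᵢ`, i.e. `K (eᵢ - eⱼ) ≤ eᵢ eⱼ (fᵢ - fⱼ) ≤ 0`, which is absurd.
In row `j`, `fₗ / (K + eⱼ fₗ) < fₗ / K` whenever `fₗ ≠ 0`, and `∑ f = 0`, so `∑ₗ fₗ / Mⱼₗ < 0`
and the row equation gives `fⱼ / Mⱼⱼ > 0`.
-/

open Filter Topology Matrix

theorem rank_le_two_of_eq_const_add_mul {R m n : Type*} [CommRing R] [StrongRankCondition R]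
    [Fintype m] [Fintype n] {M : Matrix m n R} {K : R} {e : m → R} {f : n → R}
    (hM : ∀ k l, M k l = K + e k * f l) : M.rank ≤ 2 := by
  have hfac : M = of (fun k => ![1, e k]) * (of fun l => ![K, f l])ᵀ := by
    ext k l
    simp [hM, mul_apply, Fin.sum_univ_two]
  rw [hfac]
  exact (rank_mul_le_left _ _).trans ((rank_le_card_width _).trans_eq (Fintype.card_fin 2))

section

variable {ι : Type*} [Fintype ι] {M : Matrix ι ι ℝ} {K : ℝ} {e f : ι → ℝ}

theorem pos_of_eq_const_add_mul_of_pos [Nonempty ι] (hM : ∀ k l, M k l = K + e k * f l)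
    (hf : ∑ l, f l = 0) (hpos : ∀ k l, 0 < M k l) : 0 < K := by
  obtain ⟨k⟩ := ‹Nonempty ι›
  have hrow : ∑ l, M k l = Fintype.card ι * K := by simp [hM, sum_add_distrib, ← mul_sum, hf]
  have hrow_pos := sum_pos (fun l _ => hpos k l) univ_nonempty
  rw [hrow] at hrow_pos
  exact pos_of_mul_pos_right hrow_pos (by positivity)

theorem div_add_mul_le_div_add_mul {K a x y : ℝ} (hx : 0 < K + a * x) (hy : 0 < K + a * y)
    (hxy : x ≤ y) : a / (K + a * y) ≤ a / (K + a * x) := by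
  rw [div_le_div_iff₀ hy hx]
  nlinarith [mul_nonneg (sq_nonneg a) (sub_nonneg.2 hxy)]

theorem div_add_mul_lt_div {K c x : ℝ} (hK : 0 < K) (hc : 0 < c) (hx : 0 < K + c * x)
    (hx0 : x ≠ 0) : x / (K + c * x) < x / K := by
  rw [div_lt_div_iff₀ hx hK]
  nlinarith [mul_pos hc (sq_pos_of_ne_zero hx0)]

theorem sum_div_add_mul_neg (hf : ∑ l, f l = 0) {c : ℝ} (hK : 0 < K) (hc : 0 < c)
    (hpos : ∀ l, 0 < K + c * f l) (hf0 : f ≠ 0) : ∑ l, f l / (K + c * f l) < 0 := by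
  obtain ⟨l₀, hl₀⟩ := Function.ne_iff.1 hf0
  have hle (l : ι) : f l / (K + c * f l) ≤ f l / K := by
    rcases eq_or_ne (f l) 0 with h | h
    · simp [h]
    · exact (div_add_mul_lt_div hK hc (hpos l) h).le
  calc ∑ l, f l / (K + c * f l)
      < ∑ l, f l / K := sum_lt_sum (fun l _ => hle l)
        ⟨l₀, mem_univ _, div_add_mul_lt_div hK hc (hpos l₀) hl₀⟩
    _ = 0 := by rw [← sum_div, hf, zero_div]

theorem lt_of_sum_div_col_eq_zero (hK : 0 < K) (hM : ∀ k l, M k l = K + e k * f l)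
    (hpos : ∀ k l, 0 < M k l) (hcol : ∀ l, ∑ k, e k / M k l + e l / M l l = 0) {i j : ι}
    (hij : e j < e i) (hj : 0 < e j) : f j < f i := by
  by_contra! hfij
  have hsum : ∑ k, e k / M k j ≤ ∑ k, e k / M k i := sum_le_sum fun k _ => by
    rw [hM k i, hM k j]
    exact div_add_mul_le_div_add_mul (hM k i ▸ hpos k i) (hM k j ▸ hpos k j) hfij
  have hdiag : e i / M i i ≤ e j / M j j := by linarith [hcol i, hcol j]
  rw [div_le_div_iff₀ (hpos i i) (hpos j j), hM i i, hM j j] at hdiag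
  nlinarith [mul_nonneg (mul_pos (hj.trans hij) hj).le (sub_nonneg.2 hfij),
    mul_pos hK (sub_pos.2 hij)]

theorem pos_of_sum_div_row_eq_zero (hK : 0 < K) (hM : ∀ k l, M k l = K + e k * f l)
    (hpos : ∀ k l, 0 < M k l) (hf : ∑ l, f l = 0) {j : ι}
    (hrow : ∑ l, f l / M j l + f j / M j j = 0) (hj : 0 < e j) (hf0 : f ≠ 0) : 0 < f j := by
  have hneg : ∑ l, f l / M j l < 0 := by
    simp only [hM j]
    exact sum_div_add_mul_neg hf hK hj (fun l => hM j l ▸ hpos j l) hf0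
  exact (div_pos_iff_of_pos_right (hpos j j)).1 (by linarith)

end

def IsSwissMLE (M : Matrix (Fin 4) (Fin 4) ℝ) : Prop :=
  ∀ N : Matrix (Fin 4) (Fin 4) ℝ, (∀ i j, 0 ≤ N i j) → N.rank ≤ 2 → swissL N ≤ swissL M

def swissWeight (k l : Fin 4) : ℝ := if k = l then 4 else 2

noncomputable def swissLogLik (M : Matrix (Fin 4) (Fin 4) ℝ) : ℝ :=
  ∑ k, ∑ l, swissWeight k l * Real.log (M k l)

theorem sum_swissWeight_mul (x : Fin 4 → ℝ) (l : Fin 4) :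
    ∑ k, swissWeight k l * x k = 2 * (∑ k, x k + x l) := by
  fin_cases l <;> simp [swissWeight, Fin.sum_univ_four] <;> ring

theorem swissL_transpose (N : Matrix (Fin 4) (Fin 4) ℝ) : swissL Nᵀ = swissL N := by
  simp only [swissL, transpose_apply]
  rw [Finset.prod_comm, Finset.sum_comm]
  simp_rw [eq_comm]

theorem log_prod_prod_pow_eq_swissLogLik {M : Matrix (Fin 4) (Fin 4) ℝ} (hM : ∀ k l, 0 < M k l) :
    Real.log (∏ k, ∏ l, M k l ^ (if k = l then 4 else 2)) = swissLogLik M := by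
  have hne : ∀ k l, M k l ≠ 0 := fun k l => (hM k l).ne'
  simp only [swissLogLik, swissWeight]
  rw [Real.log_prod fun k _ => prod_ne_zero_iff.2 fun l _ => pow_ne_zero _ (hne k l)]
  refine sum_congr rfl fun k _ => ?_
  rw [Real.log_prod fun l _ => pow_ne_zero _ (hne k l)]
  refine sum_congr rfl fun l _ => ?_
  split_ifs <;> simp [Real.log_pow]

theorem swissLogLik_le_of_swissL_le {M N : Matrix (Fin 4) (Fin 4) ℝ} (hM : ∀ k l, 0 < M k l)
    (hN : ∀ k l, 0 < N k l) (hsum : ∑ k, ∑ l, N k l = ∑ k, ∑ l, M k l)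
    (hle : swissL N ≤ swissL M) : swissLogLik N ≤ swissLogLik M := by
  have hden : 0 < (∑ k, ∑ l, M k l) ^ 40 := by
    have := sum_pos (fun k _ => sum_pos (fun l _ => hM k l) univ_nonempty) univ_nonempty
    positivity
  rw [swissL, swissL, hsum, div_le_div_iff_of_pos_right hden] at hle
  rw [← log_prod_prod_pow_eq_swissLogLik hM, ← log_prod_prod_pow_eq_swissLogLik hN]
  exact Real.log_le_log (prod_pos fun k _ => prod_pos fun l _ => pow_pos (hN k l) _) hle

theorem hasDerivAt_swissLogLik_add_smul {M : Matrix (Fin 4) (Fin 4) ℝ} (hM : ∀ k l, 0 < M k l)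
    (C : Matrix (Fin 4) (Fin 4) ℝ) :
    HasDerivAt (fun t : ℝ => swissLogLik (M + t • C))
      (∑ k, ∑ l, swissWeight k l * (C k l / M k l)) 0 := by
  refine HasDerivAt.fun_sum fun k _ => HasDerivAt.fun_sum fun l _ => ?_
  have hline : HasDerivAt (fun t : ℝ => M k l + t * C k l) (C k l) 0 := by
    simpa using ((hasDerivAt_id (0 : ℝ)).mul_const (C k l)).const_add (M k l)
  simpa using (hline.log (by simpa using (hM k l).ne')).const_mul (swissWeight k l)

theorem IsSwissMLE.transpose {M : Matrix (Fin 4) (Fin 4) ℝ} (h : IsSwissMLE M) :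
    IsSwissMLE Mᵀ := fun N hN hrank => by
  rw [swissL_transpose, ← swissL_transpose N]
  exact h Nᵀ (fun i j => hN j i) (by rwa [rank_transpose])

theorem IsSwissMLE.pos {M : Matrix (Fin 4) (Fin 4) ℝ} (h : IsSwissMLE M)
    (hnonneg : ∀ k l, 0 ≤ M k l) (k l : Fin 4) : 0 < M k l := by
  have hones : 0 < swissL (of fun _ _ => 1) := by norm_num [swissL]
  have hM : swissL M ≠ 0 := (hones.trans_le <| h _ (fun _ _ => zero_le_one) <|
    rank_le_two_of_eq_const_add_mul (K := 1) (e := 0) (f := 0) fun _ _ => by simp).ne'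
  refine (hnonneg k l).lt_of_ne' fun h0 => hM ?_
  have hzero : M k l ^ (if k = l then 4 else 2 : ℕ) = 0 := by
    rw [h0]
    exact zero_pow (by split_ifs <;> norm_num)
  rw [swissL, prod_eq_zero (mem_univ k) (prod_eq_zero (mem_univ l) hzero), zero_div]

theorem IsSwissMLE.sum_swissWeight_mul_div_eq_zero {M : Matrix (Fin 4) (Fin 4) ℝ}
    (h : IsSwissMLE M) (hpos : ∀ k l, 0 < M k l) (C : Matrix (Fin 4) (Fin 4) ℝ)
    (hrank : ∀ t : ℝ, (M + t • C).rank ≤ 2) (hC : ∑ k, ∑ l, C k l = 0) :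
    ∑ k, ∑ l, swissWeight k l * (C k l / M k l) = 0 := by
  refine IsLocalMax.hasDerivAt_eq_zero ?_ (hasDerivAt_swissLogLik_add_smul hpos C)
  have hnear : ∀ᶠ t in 𝓝 (0 : ℝ), ∀ k l, 0 < (M + t • C) k l := by
    simp only [eventually_all]
    intro k l
    exact continuousAt_const.eventually_lt (by fun_prop) (by simpa using hpos k l)
  filter_upwards [hnear] with t ht
  rw [zero_smul, add_zero]
  refine swissLogLik_le_of_swissL_le hpos ht ?_ (h _ (fun k l => (ht k l).le) (hrank t))
  simp [sum_add_distrib, ← mul_sum, hC]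

theorem IsSwissMLE.sum_div_col_eq_zero {M : Matrix (Fin 4) (Fin 4) ℝ} (h : IsSwissMLE M)
    (hpos : ∀ k l, 0 < M k l) {K : ℝ} {e f : Fin 4 → ℝ} (hM : ∀ k l, M k l = K + e k * f l)
    (he : ∑ k, e k = 0) (l : Fin 4) :
    ∑ k, e k / M k l + e l / M l l = 0 := by
  have hrank (t : ℝ) : (M + t • vecMulVec e (Pi.single l 1)).rank ≤ 2 :=
    rank_le_two_of_eq_const_add_mul (K := K) (e := e) (f := f + t • Pi.single l 1) fun a b => by
      simp only [Matrix.add_apply, Matrix.smul_apply, Pi.add_apply, Pi.smul_apply, hM,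
        vecMulVec_apply, smul_eq_mul]
      ring
  have hstat := h.sum_swissWeight_mul_div_eq_zero hpos _ hrank
    (by simp [vecMulVec_apply, Pi.single_apply, he])
  simp only [vecMulVec_apply, Pi.single_apply, mul_ite, mul_one, mul_zero, ite_div, zero_div,
    sum_ite_eq', mem_univ, if_true] at hstat
  rw [sum_swissWeight_mul] at hstat
  linarith

theorem maximizer_order_e_implies_order_f_general
    (M : Matrix (Fin 4) (Fin 4) ℝ)
    (hnonneg : ∀ i j, 0 ≤ M i j)
    (hmax : ∀ N : Matrix (Fin 4) (Fin 4) ℝ,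
      (∀ i j, 0 ≤ N i j) → N.rank ≤ 2 → swissL N ≤ swissL M)
    (K : ℝ) (e f : Fin 4 → ℝ)
    (he : ∑ k, e k = 0) (hf : ∑ k, f k = 0)
    (hM : ∀ k l, M k l = K + e k * f l)
    (i j : Fin 4) (hij : e i > e j) (hj : e j > 0) :
    f i > f j ∧ f j > 0 := by
  have hpos : ∀ k l, 0 < M k l := IsSwissMLE.pos hmax hnonneg
  have hK : 0 < K := pos_of_eq_const_add_mul_of_pos hM hf hpos
  have hfij : f j < f i :=
    lt_of_sum_div_col_eq_zero hK hM hpos (IsSwissMLE.sum_div_col_eq_zero hmax hpos hM he) hij hj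
  have hrow : ∑ l, f l / M j l + f j / M j j = 0 :=
    (IsSwissMLE.transpose hmax).sum_div_col_eq_zero (fun k l => hpos l k)
      (fun k l => by rw [transpose_apply, hM, mul_comm]) hf j
  exact ⟨hfij, pos_of_sum_div_row_eq_zero hK hM hpos hf hrow hj (by rintro rfl; simp at hfij)⟩

theorem maximizer_order_e_implies_order_f
    (M : Matrix (Fin 4) (Fin 4) ℝ)
    (hnonneg : ∀ i j, 0 ≤ M i j)
    (hrank : M.rank ≤ 2)
    (hsum : 0 < ∑ i : Fin 4, ∑ j : Fin 4, M i j)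
    (hmax : ∀ N : Matrix (Fin 4) (Fin 4) ℝ,
      (∀ i j, 0 ≤ N i j) → N.rank ≤ 2 → swissL N ≤ swissL M)
    (K : ℝ) (hK : K ≠ 0) (e f : Fin 4 → ℝ)
    (he : ∑ k, e k = 0) (hf : ∑ k, f k = 0)
    (hM : ∀ k l, M k l = K + e k * f l)
    (i j : Fin 4) (hij : e i > e j) (hj : e j > 0) :
    f i > f j ∧ f j > 0 :=
  maximizer_order_e_implies_order_f_general M hnonneg hmax K e f he hf hM i j hij hj
end

section
/- Let M be a 4×4 real matrix with nonnegative entries, of rank at most 2, with ∑_{i,j} M_{ij} > 0, such that L(M) ≥ L(N) for every 4×4 real matrix N with nonnegative entries and rank at most 2. Then no three rows of M are equal to each other; that is, there do not exist distinct indices i, j, k such that row i, row j and row k of M coincide. -/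
/-!
If three rows of `M` coincide, the likelihood depends only on eight entries (one repeated row and
the remaining row), and weighted AM-GM bounds it by `2 ^ 92 / (3 ^ 24 * 40 ^ 40)`. The rank-two
block matrix with entries `3` on the two diagonal `2 × 2` blocks and `2` elsewhere has likelihood
`3 ^ 24 * 2 ^ 16 / 40 ^ 40`, which is larger because `2 ^ 76 < 3 ^ 48`; so such an `M` cannot be a
maximizer.
-/

open Finset

theorem prod_div_pow_le_sum_div_sum_pow {ι : Type*} (s : Finset ι) (x : ι → ℝ) (e : ι → ℕ)
    (hx : ∀ i ∈ s, 0 ≤ x i) :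
    ∏ i ∈ s, (x i / e i) ^ e i ≤ ((∑ i ∈ s, x i) / ∑ i ∈ s, e i) ^ ∑ i ∈ s, e i := by
  set N := ∑ i ∈ s, e i with hN
  rcases Nat.eq_zero_or_pos N with hN0 | hNpos
  · have he : ∀ i ∈ s, e i = 0 := sum_eq_zero_iff.1 hN0
    rw [hN0, pow_zero, prod_eq_one fun i hi => by rw [he i hi, pow_zero]]
  have hz : ∀ i ∈ s, 0 ≤ x i / e i := fun i hi => div_nonneg (hx i hi) (Nat.cast_nonneg _)
  -- `e i * (x i / e i)` is `x i`, or `0` when `e i = 0`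
  have hmean : ∑ i ∈ s, (e i : ℝ) * (x i / e i) ≤ ∑ i ∈ s, x i :=
    sum_le_sum fun i hi => by
      rcases eq_or_ne (e i) 0 with h | h
      · simp [h, hx i hi]
      · rw [mul_div_cancel₀ _ (by exact_mod_cast h)]
  have amgm := Real.geom_mean_le_arith_mean s (fun i => (e i : ℝ)) (fun i => x i / e i)
    (fun i _ => Nat.cast_nonneg _) (by exact_mod_cast hNpos) hz
  simp only [Real.rpow_natCast, ← Nat.cast_sum, ← hN] at amgm
  replace amgm := amgm.trans (div_le_div_of_nonneg_right hmean N.cast_nonneg)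
  rwa [Real.rpow_inv_le_iff_of_pos (prod_nonneg fun i hi => pow_nonneg (hz i hi) _)
    (div_nonneg (sum_nonneg hx) N.cast_nonneg) (by exact_mod_cast hNpos),
    Real.rpow_natCast] at amgm

theorem swissL_submatrix_perm (M : Matrix (Fin 4) (Fin 4) ℝ) (σ : Equiv.Perm (Fin 4)) :
    swissL (M.submatrix σ σ) = swissL M := by
  have hprod (f : Fin 4 → Fin 4 → ℝ) : ∏ i, ∏ j, f (σ i) (σ j) = ∏ i, ∏ j, f i j :=
    (Equiv.prod_comp σ fun i => ∏ j, f i (σ j)).trans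
      (prod_congr rfl fun i _ => Equiv.prod_comp σ (f i))
  have hsum (f : Fin 4 → Fin 4 → ℝ) : ∑ i, ∑ j, f (σ i) (σ j) = ∑ i, ∑ j, f i j :=
    (Equiv.sum_comp σ fun i => ∑ j, f i (σ j)).trans
      (sum_congr rfl fun i _ => Equiv.sum_comp σ (f i))
  rw [swissL, swissL, ← hprod fun i j => M i j ^ (if i = j then 4 else 2), ← hsum M]
  simp only [Matrix.submatrix_apply, σ.apply_eq_iff_eq]

theorem swissL_le_of_rows_eq_row_zero (M : Matrix (Fin 4) (Fin 4) ℝ) (hM : ∀ i j, 0 ≤ M i j)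
    (h₁ : M 1 = M 0) (h₂ : M 2 = M 0) : swissL M ≤ 2 ^ 92 / (3 ^ 24 * 40 ^ 40) := by
  -- the weights are the total exponents of the entries `M 0 c` (counted three times) and `M 3 c`
  have amgm := prod_div_pow_le_sum_div_sum_pow univ
    ![3 * M 0 0, 3 * M 0 1, 3 * M 0 2, 3 * M 0 3, M 3 0, M 3 1, M 3 2, M 3 3]
    ![8, 8, 8, 6, 2, 2, 2, 4] (by simp [Fin.forall_fin_succ, hM])
  set S := 3 * M 0 0 + 3 * M 0 1 + 3 * M 0 2 + 3 * M 0 3 + M 3 0 + M 3 1 + M 3 2 + M 3 3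
    with hS
  simp only [Fin.prod_univ_eight, Fin.sum_univ_eight, Matrix.cons_val_zero, Matrix.cons_val_one,
    Matrix.cons_val, Nat.cast_ofNat, ← hS] at amgm
  have hsum : ∑ i, ∑ j, M i j = S := by
    simp only [S, Fin.sum_univ_four, h₁, h₂]
    ring
  have hprod : ∏ i, ∏ j, M i j ^ (if i = j then 4 else 2) =
      M 0 0 ^ 8 * M 0 1 ^ 8 * M 0 2 ^ 8 * M 0 3 ^ 6 *
        M 3 0 ^ 2 * M 3 1 ^ 2 * M 3 2 ^ 2 * M 3 3 ^ 4 := by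
    simp only [Fin.prod_univ_four, h₁, h₂, Fin.isValue, Fin.reduceEq, ite_true, ite_false]
    ring
  -- `S` is made opaque so that `linarith` treats `S ^ 40` as a monomial instead of expanding it
  clear_value S
  rw [swissL, hsum, hprod]
  refine div_le_of_le_mul₀ (by positivity) (by positivity) ?_
  linarith

theorem swissL_le_of_three_rows_eq (M : Matrix (Fin 4) (Fin 4) ℝ) (hM : ∀ i j, 0 ≤ M i j)
    {i j k : Fin 4} (hij : i ≠ j) (hik : i ≠ k) (hjk : j ≠ k) (hMij : M i = M j)
    (hMjk : M j = M k) : swissL M ≤ 2 ^ 92 / (3 ^ 24 * 40 ^ 40) := by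
  obtain ⟨σ, hσ⟩ := Equiv.Perm.exists_extending_pair ![(0 : Fin 4), 1, 2] ![i, j, k] (by decide)
    (by simp [Function.Injective, Fin.forall_fin_succ, hij, hik, hjk, hij.symm, hik.symm,
      hjk.symm])
  have h₀ : σ 0 = i := hσ 0
  have h₁ : σ 1 = j := hσ 1
  have h₂ : σ 2 = k := hσ 2
  rw [← swissL_submatrix_perm M σ]
  refine swissL_le_of_rows_eq_row_zero _ (fun a b => hM _ _) ?_ ?_ <;> ext c <;>
    simp [h₀, h₁, h₂, hMij, hMjk]

def swissBlock : Matrix (Fin 4) (Fin 4) ℝ := !![3, 3, 2, 2; 3, 3, 2, 2; 2, 2, 3, 3; 2, 2, 3, 3]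

theorem swissBlock_nonneg (i j : Fin 4) : 0 ≤ swissBlock i j := by
  fin_cases i <;> fin_cases j <;> norm_num [swissBlock]

theorem swissBlock_rank_le_two : swissBlock.rank ≤ 2 := by
  have h : swissBlock = (!![1, 0; 1, 0; 0, 1; 0, 1] : Matrix (Fin 4) (Fin 2) ℝ) *
      (!![3, 3, 2, 2; 2, 2, 3, 3] : Matrix (Fin 2) (Fin 4) ℝ) := by
    simp [swissBlock]
  rw [h]
  exact (Matrix.rank_mul_le_left _ _).trans
    ((Matrix.rank_le_card_width _).trans_eq (Fintype.card_fin 2))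

theorem swissL_swissBlock : swissL swissBlock = 3 ^ 24 * 2 ^ 16 / 40 ^ 40 := by
  simp [swissL, swissBlock, Fin.prod_univ_four, Fin.sum_univ_four]
  norm_num

theorem maximizer_has_no_three_equal_rows_general
    (M : Matrix (Fin 4) (Fin 4) ℝ)
    (hnonneg : ∀ i j, 0 ≤ M i j)
    (hmax : ∀ N : Matrix (Fin 4) (Fin 4) ℝ,
      (∀ i j, 0 ≤ N i j) → N.rank ≤ 2 → swissL N ≤ swissL M) :
    ¬ ∃ i j k : Fin 4, i ≠ j ∧ i ≠ k ∧ j ≠ k ∧ M i = M j ∧ M j = M k := by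
  rintro ⟨i, j, k, hij, hik, hjk, hMij, hMjk⟩
  have hM := swissL_le_of_three_rows_eq M hnonneg hij hik hjk hMij hMjk
  have hblock := hmax swissBlock swissBlock_nonneg swissBlock_rank_le_two
  rw [swissL_swissBlock] at hblock
  have hgap : (2 : ℝ) ^ 92 / (3 ^ 24 * 40 ^ 40) < 3 ^ 24 * 2 ^ 16 / 40 ^ 40 := by norm_num
  linarith

theorem maximizer_has_no_three_equal_rows
    (M : Matrix (Fin 4) (Fin 4) ℝ)
    (hnonneg : ∀ i j, 0 ≤ M i j)
    (hrank : M.rank ≤ 2)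
    (hsum : 0 < ∑ i : Fin 4, ∑ j : Fin 4, M i j)
    (hmax : ∀ N : Matrix (Fin 4) (Fin 4) ℝ,
      (∀ i j, 0 ≤ N i j) → N.rank ≤ 2 → swissL N ≤ swissL M) :
    ¬ ∃ i j k : Fin 4, i ≠ j ∧ i ≠ k ∧ j ≠ k ∧ M i = M j ∧ M j = M k :=
  maximizer_has_no_three_equal_rows_general M hnonneg hmax
end
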